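/- arXiv:1911.10894 — 2 statements merged into one kernel-verified Lean document; each statement's English description precedes it below -/
import Mathlib

section
/- Under the stated setup, if λ₂ = −λ₁ with 0 < |λ₁| < 1, then for every even h ∈ ℕ the exact identity CV⁺(h) = D₁₀·(λ₁ʰ)^⟨α−1⟩ holds with D₁₀ = Σ_{j=0}^∞ ∫_{S₂} C₃·(A₃+B₃)^⟨α−1⟩ dΓ, and for every odd h ∈ ℕ the exact identity CV⁺(h) = D₁₁·(λ₁ʰ)^⟨α−1⟩ holds with D₁₁ = Σ_{j=0}^∞ ∫_{S₂} C₃·(A₃−B₃)^⟨α−1⟩ dΓ. -/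
open MeasureTheory Filter Topology

/-- The signed power `x^⟨p⟩ = |x|^p · sign x`. -/
noncomputable def spow (x p : ℝ) : ℝ := |x| ^ p * Real.sign x

/-- The unit sphere `S₂ ⊆ ℝ²`. -/
abbrev Sphere2 : Type := {s : ℝ × ℝ // s.1 ^ 2 + s.2 ^ 2 = 1}

noncomputable def A3 (a1 a2 a3 a4 l1 l2 : ℝ) (j : ℕ) (s : Sphere2) : ℝ :=
  (-(l1 ^ j * a3 * s.1.1) + l2 * l1 ^ j * s.1.2 - l1 ^ j * a4 * s.1.2) / (l2 - l1)

noncomputable def B3 (a1 a2 a3 a4 l1 l2 : ℝ) (j : ℕ) (s : Sphere2) : ℝ :=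
  (l2 ^ j * a3 * s.1.1 - l1 * l2 ^ j * s.1.2 + l2 ^ j * a4 * s.1.2) / (l2 - l1)

noncomputable def C3 (a1 a2 a3 a4 l1 l2 : ℝ) (j : ℕ) (s : Sphere2) : ℝ :=
  (l1 ^ j * (l2 * s.1.1 - a1 * s.1.1 - a2 * s.1.2)
    + l2 ^ j * (-(l1 * s.1.1) + a1 * s.1.1 + a2 * s.1.2)) / (l2 - l1)

/-- The cross-codifference `CD(X₁(t), X₂(t+h))` of the bidimensional α-stable AR(1) model. -/
noncomputable def CDpos (Γ : Measure Sphere2) (α a1 a2 a3 a4 l1 l2 : ℝ) (h : ℕ) : ℝ :=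
  ∑' j : ℕ, ∫ s,
    (|l1 ^ h * A3 a1 a2 a3 a4 l1 l2 j s + l2 ^ h * B3 a1 a2 a3 a4 l1 l2 j s| ^ α
      + |C3 a1 a2 a3 a4 l1 l2 j s| ^ α
      - |C3 a1 a2 a3 a4 l1 l2 j s - (l1 ^ h * A3 a1 a2 a3 a4 l1 l2 j s + l2 ^ h * B3 a1 a2 a3 a4 l1 l2 j s)| ^ α) ∂Γ

/-- The cross-covariation `CV(X₁(t), X₂(t+h))` of the bidimensional α-stable AR(1) model. -/
noncomputable def CVpos (Γ : Measure Sphere2) (α a1 a2 a3 a4 l1 l2 : ℝ) (h : ℕ) : ℝ :=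
  ∑' j : ℕ, ∫ s,
    C3 a1 a2 a3 a4 l1 l2 j s * spow (l1 ^ h * A3 a1 a2 a3 a4 l1 l2 j s + l2 ^ h * B3 a1 a2 a3 a4 l1 l2 j s) (α - 1) ∂Γ

noncomputable def D4 (Γ : Measure Sphere2) (α a1 a2 a3 a4 l1 l2 : ℝ) : ℝ :=
  ∑' j : ℕ, ∫ s, A3 a1 a2 a3 a4 l1 l2 j s * spow (C3 a1 a2 a3 a4 l1 l2 j s) (α - 1) ∂Γ

noncomputable def D5 (Γ : Measure Sphere2) (α a1 a2 a3 a4 l1 l2 : ℝ) : ℝ :=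
  ∑' j : ℕ, ∫ s, B3 a1 a2 a3 a4 l1 l2 j s * spow (C3 a1 a2 a3 a4 l1 l2 j s) (α - 1) ∂Γ

noncomputable def D7 (Γ : Measure Sphere2) (α a1 a2 a3 a4 l1 l2 : ℝ) : ℝ :=
  ∑' j : ℕ, ∫ s, C3 a1 a2 a3 a4 l1 l2 j s * spow (A3 a1 a2 a3 a4 l1 l2 j s) (α - 1) ∂Γ

noncomputable def D8 (Γ : Measure Sphere2) (α a1 a2 a3 a4 l1 l2 : ℝ) : ℝ :=
  ∑' j : ℕ, ∫ s, C3 a1 a2 a3 a4 l1 l2 j s * spow (B3 a1 a2 a3 a4 l1 l2 j s) (α - 1) ∂Γ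

noncomputable def D10 (Γ : Measure Sphere2) (α a1 a2 a3 a4 l1 l2 : ℝ) : ℝ :=
  ∑' j : ℕ, ∫ s, C3 a1 a2 a3 a4 l1 l2 j s * spow (A3 a1 a2 a3 a4 l1 l2 j s + B3 a1 a2 a3 a4 l1 l2 j s) (α - 1) ∂Γ

noncomputable def D11 (Γ : Measure Sphere2) (α a1 a2 a3 a4 l1 l2 : ℝ) : ℝ :=
  ∑' j : ℕ, ∫ s, C3 a1 a2 a3 a4 l1 l2 j s * spow (A3 a1 a2 a3 a4 l1 l2 j s - B3 a1 a2 a3 a4 l1 l2 j s) (α - 1) ∂Γ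


lemma spow_mul_arg (x y p : ℝ) : spow (x * y) p = spow x p * spow y p := by
  unfold spow
  have hmr := Real.mul_rpow (abs_nonneg x) (abs_nonneg y) (z := p)
  rcases lt_trichotomy x 0 with hx | hx | hx
  · rcases lt_trichotomy y 0 with hy | hy | hy
    · rw [Real.sign_of_pos (mul_pos_of_neg_of_neg hx hy), Real.sign_of_neg hx,
        Real.sign_of_neg hy, abs_mul, hmr]; ring
    · simp [hy]
    · rw [Real.sign_of_neg (mul_neg_of_neg_of_pos hx hy), Real.sign_of_neg hx,
        Real.sign_of_pos hy, abs_mul, hmr]; ring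
  · simp [hx]
  · rcases lt_trichotomy y 0 with hy | hy | hy
    · rw [Real.sign_of_neg (mul_neg_of_pos_of_neg hx hy), Real.sign_of_pos hx,
        Real.sign_of_neg hy, abs_mul, hmr]; ring
    · simp [hy]
    · rw [Real.sign_of_pos (mul_pos hx hy), Real.sign_of_pos hx,
        Real.sign_of_pos hy, abs_mul, hmr]; ring

theorem CV_pos_exact_cases_IV_V
    (Γ : Measure Sphere2) [IsFiniteMeasure Γ]
    (α a1 a2 a3 a4 l1 l2 : ℝ) (hα1 : 1 < α) (hα2 : α < 2)
    (hl1 : l1 ^ 2 - (a1 + a4) * l1 + (a1 * a4 - a2 * a3) = 0)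
    (hl2 : l2 ^ 2 - (a1 + a4) * l2 + (a1 * a4 - a2 * a3) = 0)
    (hne : l1 ≠ l2) (habs1 : |l1| < 1) (habs2 : |l2| < 1)
    (hopp : l2 = -l1) (hl0 : 0 < |l1|) :
    ∀ h : ℕ,
      (Even h → CVpos Γ α a1 a2 a3 a4 l1 l2 h = D10 Γ α a1 a2 a3 a4 l1 l2 * spow (l1 ^ h) (α - 1)) ∧
      (Odd h → CVpos Γ α a1 a2 a3 a4 l1 l2 h = D11 Γ α a1 a2 a3 a4 l1 l2 * spow (l1 ^ h) (α - 1)) :=  by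
  intro h
  constructor
  · intro heven
    have hpow : l2 ^ h = l1 ^ h := by rw [hopp]; exact heven.neg_pow l1
    have key : ∀ (j : ℕ) (s : Sphere2),
        C3 a1 a2 a3 a4 l1 l2 j s *
          spow (l1 ^ h * A3 a1 a2 a3 a4 l1 l2 j s + l2 ^ h * B3 a1 a2 a3 a4 l1 l2 j s) (α - 1)
        = C3 a1 a2 a3 a4 l1 l2 j s *
            spow (A3 a1 a2 a3 a4 l1 l2 j s + B3 a1 a2 a3 a4 l1 l2 j s) (α - 1) *
          spow (l1 ^ h) (α - 1) := by
      intro j s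
      rw [hpow, ← mul_add, spow_mul_arg]; ring
    simp only [CVpos, key, integral_mul_const, D10, tsum_mul_right]
  · intro hodd
    have hpow : l2 ^ h = -(l1 ^ h) := by rw [hopp]; exact hodd.neg_pow l1
    have key : ∀ (j : ℕ) (s : Sphere2),
        C3 a1 a2 a3 a4 l1 l2 j s *
          spow (l1 ^ h * A3 a1 a2 a3 a4 l1 l2 j s + l2 ^ h * B3 a1 a2 a3 a4 l1 l2 j s) (α - 1)
        = C3 a1 a2 a3 a4 l1 l2 j s *
            spow (A3 a1 a2 a3 a4 l1 l2 j s - B3 a1 a2 a3 a4 l1 l2 j s) (α - 1) *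
          spow (l1 ^ h) (α - 1) := by
      intro j s
      rw [hpow, show l1 ^ h * A3 a1 a2 a3 a4 l1 l2 j s + -(l1 ^ h) * B3 a1 a2 a3 a4 l1 l2 j s
          = l1 ^ h * (A3 a1 a2 a3 a4 l1 l2 j s - B3 a1 a2 a3 a4 l1 l2 j s) by ring, spow_mul_arg]
      ring
    simp only [CVpos, key, integral_mul_const, D11, tsum_mul_right]
end

section
/- Under the stated setup, if |λ₁| > |λ₂| and D₁ ≠ 0, then CV⁻(h) ≠ 0 for all sufficiently large h and lim_{h→∞} CD⁻(h)/CV⁻(h) = α; that is, the cross-codifference and the cross-covariation at negative lags are asymptotically proportional with proportionality constant α. -/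
open MeasureTheory Filter Topology

lemma measurable_realSign : Measurable Real.sign := by
  unfold Real.sign
  refine Measurable.ite (measurableSet_lt measurable_id measurable_const) measurable_const ?_
  exact Measurable.ite (measurableSet_lt measurable_const measurable_id) measurable_const
    measurable_const

lemma measurable_spow {p : ℝ} (hp : 0 ≤ p) : Measurable (fun x => spow x p) := by
  unfold spow
  exact (((Real.continuous_rpow_const hp).comp continuous_abs).measurable).mul
    measurable_realSign

lemma spow_zero (p : ℝ) : spow 0 p = 0 := by simp [spow]

lemma abs_spow {p : ℝ} (hp : p ≠ 0) (x : ℝ) : |spow x p| = |x| ^ p := by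
  rcases lt_trichotomy x 0 with hx | rfl | hx
  · rw [spow, Real.sign_of_neg hx, abs_mul]
    simp [abs_of_nonneg (Real.rpow_nonneg (abs_nonneg x) p)]
  · simp [spow, Real.zero_rpow hp]
  · rw [spow, Real.sign_of_pos hx, abs_mul]
    simp [abs_of_nonneg (Real.rpow_nonneg (abs_nonneg x) p)]

lemma spow_of_nonneg {p : ℝ} (hp : p ≠ 0) {x : ℝ} (hx : 0 ≤ x) : spow x p = x ^ p := by
  rcases hx.eq_or_lt with rfl | hx
  · simp [spow, Real.zero_rpow hp]
  · rw [spow, Real.sign_of_pos hx, abs_of_pos hx, mul_one]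

lemma spow_neg (x p : ℝ) : spow (-x) p = - spow x p := by
  rw [spow, spow, abs_neg, Real.sign_neg, mul_neg]

lemma real_rpow_subadd {p : ℝ} (hp0 : 0 ≤ p) (hp1 : p ≤ 1) {a b : ℝ} (ha : 0 ≤ a)
    (hb : 0 ≤ b) : (a + b) ^ p ≤ a ^ p + b ^ p := by
  have h := NNReal.rpow_add_le_add_rpow a.toNNReal b.toNNReal hp0 hp1
  have := NNReal.coe_le_coe.2 h
  rwa [NNReal.coe_add, NNReal.coe_rpow, NNReal.coe_rpow, NNReal.coe_rpow, NNReal.coe_add,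
    Real.coe_toNNReal a ha, Real.coe_toNNReal b hb] at this

lemma rpow_diff_le {p : ℝ} (hp0 : 0 ≤ p) (hp1 : p ≤ 1) {a b : ℝ} (hb : 0 ≤ b) (hba : b ≤ a) :
    a ^ p - b ^ p ≤ (a - b) ^ p := by
  have h := real_rpow_subadd hp0 hp1 hb (sub_nonneg.2 hba)
  rw [add_sub_cancel] at h
  linarith

lemma spow_holder {p : ℝ} (hp0 : 0 < p) (hp1 : p ≤ 1) (x y : ℝ) :
    |spow x p - spow y p| ≤ 2 * |x - y| ^ p := by
  have hp : p ≠ 0 := hp0.ne'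
  -- key nonneg case with constant 1
  have key : ∀ u v : ℝ, 0 ≤ v → v ≤ u → spow u p - spow v p ≤ |u - v| ^ p := by
    intro u v hv hvu
    rw [spow_of_nonneg hp (hv.trans hvu), spow_of_nonneg hp hv,
      abs_of_nonneg (sub_nonneg.2 hvu)]
    exact rpow_diff_le hp0.le hp1 hv hvu
  have keyabs : ∀ u v : ℝ, 0 ≤ v → 0 ≤ u → |spow u p - spow v p| ≤ |u - v| ^ p := by
    intro u v hv hu
    rcases le_total v u with h | h
    · rw [abs_of_nonneg]
      · exact key u v hv h
      · rw [sub_nonneg, spow_of_nonneg hp hv, spow_of_nonneg hp (hv.trans h)]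
        exact Real.rpow_le_rpow hv h hp0.le
    · rw [abs_sub_comm, abs_sub_comm u v]
      rw [abs_of_nonneg]
      · exact key v u hu h
      · rw [sub_nonneg, spow_of_nonneg hp hu, spow_of_nonneg hp (hu.trans h)]
        exact Real.rpow_le_rpow hu h hp0.le
  have mixed : ∀ u v : ℝ, 0 ≤ u → v ≤ 0 → |spow u p - spow v p| ≤ 2 * |u - v| ^ p := by
    intro u v hu hv
    have h1 : spow u p = u ^ p := spow_of_nonneg hp hu
    have h2 : spow v p = -((-v) ^ p) := by
      rw [← neg_neg v, spow_neg, spow_of_nonneg hp (by linarith : (0:ℝ) ≤ -v)]; ring_nf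
    have huv : |u - v| = u + (-v) := by
      rw [abs_of_nonneg (by linarith)]; ring
    rw [h1, h2, huv, sub_neg_eq_add]
    have hu' : u ^ p ≤ (u + -v) ^ p := Real.rpow_le_rpow hu (by linarith) hp0.le
    have hv' : (-v) ^ p ≤ (u + -v) ^ p := Real.rpow_le_rpow (by linarith) (by linarith) hp0.le
    have hnn : 0 ≤ u ^ p := Real.rpow_nonneg hu p
    have hnn2 : 0 ≤ (-v) ^ p := Real.rpow_nonneg (by linarith) p
    rw [abs_of_nonneg (by linarith)]
    linarith
  rcases le_total 0 x with hx | hx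
  · rcases le_total 0 y with hy | hy
    · refine (keyabs x y hy hx).trans ?_
      nlinarith [Real.rpow_nonneg (abs_nonneg (x - y)) p]
    · exact mixed x y hx hy
  · rcases le_total 0 y with hy | hy
    · rw [abs_sub_comm, abs_sub_comm x y]
      exact mixed y x hy hx
    · have h := keyabs (-x) (-y) (by linarith) (by linarith)
      rw [spow_neg, spow_neg] at h
      have heq : |-spow x p - -spow y p| = |spow x p - spow y p| := by
        rw [show -spow x p - -spow y p = -(spow x p - spow y p) by ring, abs_neg]
      have heq2 : |-x - -y| = |x - y| := by
        rw [show -x - -y = -(x - y) by ring, abs_neg]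
      rw [heq, heq2] at h
      nlinarith [Real.rpow_nonneg (abs_nonneg (x - y)) p]

lemma hasDerivAt_abs_rpow_spow {q : ℝ} (hq : 1 < q) (hq2 : q < 2) (x : ℝ) :
    HasDerivAt (fun y : ℝ => |y| ^ q) (q * spow x (q - 1)) x := by
  have h := hasDerivAt_abs_rpow x hq
  convert h using 1
  rcases lt_trichotomy x 0 with hx | rfl | hx
  · rw [spow, Real.sign_of_neg hx, abs_of_neg hx]
    rw [show q - 2 = (q - 1) + (-1) by ring, Real.rpow_add (by linarith : (0:ℝ) < -x),
      Real.rpow_neg_one]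
    have hx' : -x ≠ 0 := by linarith
    field_simp
    rw [mul_div_cancel_left₀ _ (by linarith : x ≠ 0)]
  · rw [spow_zero, mul_zero, abs_zero, Real.zero_rpow (by linarith : q - 2 ≠ 0)]
    ring
  · rw [spow, Real.sign_of_pos hx, abs_of_pos hx]
    rw [show q - 2 = (q - 1) + (-1) by ring, Real.rpow_add hx, Real.rpow_neg_one]
    have hx' : x ≠ 0 := hx.ne'
    field_simp

lemma key_est {q : ℝ} (hq1 : 1 < q) (hq2 : q < 2) (c e : ℝ) :
    |(|c| ^ q - |c - e| ^ q - q * (spow c (q - 1) * e))| ≤ 2 * q * |e| ^ q := by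
  have hq0 : (0:ℝ) < q := by linarith
  rcases eq_or_ne e 0 with rfl | he
  · simp [Real.zero_rpow hq0.ne']
  · set f : ℝ → ℝ := fun y => |y| ^ q with hf
    set a := min c (c - e) with ha
    set b := max c (c - e) with hb
    have hab : a < b := by
      rcases lt_or_gt_of_ne he with h | h
      · simp only [ha, hb]
        rw [min_eq_left (by linarith), max_eq_right (by linarith)]
        linarith
      · simp only [ha, hb]
        rw [min_eq_right (by linarith), max_eq_left (by linarith)]
        linarith
    have hcont : ContinuousOn f (Set.Icc a b) :=
      (continuous_iff_continuousAt.2 fun y => (hasDerivAt_abs_rpow_spow hq1 hq2 y).continuousAt).continuousOn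
    obtain ⟨ξ, hξ, hslope⟩ := exists_hasDerivAt_eq_slope f (fun y => q * spow y (q - 1)) hab
      hcont (fun y _ => hasDerivAt_abs_rpow_spow hq1 hq2 y)
    have hfb : (f b - f a) / (b - a) = (f c - f (c - e)) / e := by
      rcases lt_or_gt_of_ne he with h | h
      · simp only [ha, hb]
        rw [min_eq_left (by linarith), max_eq_right (by linarith)]
        rw [show c - e - c = -e by ring]
        rw [div_eq_div_iff (by linarith) he]
        ring
      · simp only [ha, hb]
        rw [min_eq_right (by linarith), max_eq_left (by linarith)]
        rw [show c - (c - e) = e by ring]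
    rw [hfb] at hslope
    have hmain : f c - f (c - e) = q * spow ξ (q - 1) * e := by
      field_simp at hslope
      linarith [hslope]
    have hsub : |ξ - c| ≤ |e| := by
      have hh1 : c - |e| ≤ a := le_min (by linarith [abs_nonneg e]) (by linarith [le_abs_self e])
      have hh2 : b ≤ c + |e| := max_le (by linarith [abs_nonneg e]) (by linarith [neg_le_abs e])
      rw [abs_le]
      exact ⟨by linarith [hξ.1], by linarith [hξ.2]⟩
    have hholder : |spow ξ (q - 1) - spow c (q - 1)| ≤ 2 * |ξ - c| ^ (q - 1) :=
      spow_holder (by linarith) (by linarith) ξ c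
    have hmono : |ξ - c| ^ (q - 1) ≤ |e| ^ (q - 1) :=
      Real.rpow_le_rpow (abs_nonneg _) hsub (by linarith)
    have : |c| ^ q - |c - e| ^ q - q * (spow c (q - 1) * e)
        = q * e * (spow ξ (q - 1) - spow c (q - 1)) := by
      have : f c - f (c - e) = |c| ^ q - |c - e| ^ q := rfl
      rw [← this, hmain]; ring
    rw [this, abs_mul, abs_mul, abs_of_pos hq0]
    have hee : |e| ^ (q - 1) * |e| = |e| ^ q := by
      nth_rewrite 2 [← Real.rpow_one |e|]
      rw [← Real.rpow_add (abs_pos.2 he)]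
      norm_num
    calc q * |e| * |spow ξ (q - 1) - spow c (q - 1)|
        ≤ q * |e| * (2 * |e| ^ (q - 1)) := by
          have hh := hholder.trans
            (by nlinarith [hmono] : 2 * |ξ - c| ^ (q - 1) ≤ 2 * |e| ^ (q - 1))
          exact mul_le_mul_of_nonneg_left hh (by positivity)
      _ = 2 * q * (|e| ^ (q - 1) * |e|) := by ring
      _ = 2 * q * |e| ^ q := by rw [hee]

lemma pow_rpow_swap {L : ℝ} (hL : 0 ≤ L) (n : ℕ) (z : ℝ) :
    ((L ^ n : ℝ)) ^ z = (L ^ z) ^ n := by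
  rw [← Real.rpow_natCast_mul hL, mul_comm, Real.rpow_mul_natCast hL]


noncomputable def A1 (a1 a2 a3 a4 l1 l2 : ℝ) (j : ℕ) (s : Sphere2) : ℝ :=
  (l2 * l1 ^ j * s.1.1 - l1 ^ j * a1 * s.1.1 - l1 ^ j * a2 * s.1.2) / (l2 - l1)

noncomputable def B1 (a1 a2 a3 a4 l1 l2 : ℝ) (j : ℕ) (s : Sphere2) : ℝ :=
  (-(l1 * l2 ^ j * s.1.1) + l2 ^ j * a1 * s.1.1 + l2 ^ j * a2 * s.1.2) / (l2 - l1)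

noncomputable def C1 (a1 a2 a3 a4 l1 l2 : ℝ) (j : ℕ) (s : Sphere2) : ℝ :=
  (l1 ^ j * (-(a3 * s.1.1) + l2 * s.1.2 - a4 * s.1.2)
    + l2 ^ j * (a3 * s.1.1 - l1 * s.1.2 + a4 * s.1.2)) / (l2 - l1)

/-- The cross-codifference `CD(X₁(t), X₂(t-h))` of the bidimensional α-stable AR(1) model. -/
noncomputable def CDneg (Γ : Measure Sphere2) (α a1 a2 a3 a4 l1 l2 : ℝ) (h : ℕ) : ℝ :=
  ∑' j : ℕ, ∫ s,
    (|l1 ^ h * A1 a1 a2 a3 a4 l1 l2 j s + l2 ^ h * B1 a1 a2 a3 a4 l1 l2 j s| ^ α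
      + |C1 a1 a2 a3 a4 l1 l2 j s| ^ α
      - |C1 a1 a2 a3 a4 l1 l2 j s - (l1 ^ h * A1 a1 a2 a3 a4 l1 l2 j s + l2 ^ h * B1 a1 a2 a3 a4 l1 l2 j s)| ^ α) ∂Γ

/-- The cross-covariation `CV(X₁(t), X₂(t-h))` of the bidimensional α-stable AR(1) model. -/
noncomputable def CVneg (Γ : Measure Sphere2) (α a1 a2 a3 a4 l1 l2 : ℝ) (h : ℕ) : ℝ :=
  ∑' j : ℕ, ∫ s,
    spow (C1 a1 a2 a3 a4 l1 l2 j s) (α - 1) * (l1 ^ h * A1 a1 a2 a3 a4 l1 l2 j s + l2 ^ h * B1 a1 a2 a3 a4 l1 l2 j s) ∂Γ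

noncomputable def D1 (Γ : Measure Sphere2) (α a1 a2 a3 a4 l1 l2 : ℝ) : ℝ :=
  ∑' j : ℕ, ∫ s, A1 a1 a2 a3 a4 l1 l2 j s * spow (C1 a1 a2 a3 a4 l1 l2 j s) (α - 1) ∂Γ

noncomputable def D2 (Γ : Measure Sphere2) (α a1 a2 a3 a4 l1 l2 : ℝ) : ℝ :=
  ∑' j : ℕ, ∫ s, B1 a1 a2 a3 a4 l1 l2 j s * spow (C1 a1 a2 a3 a4 l1 l2 j s) (α - 1) ∂Γ

set_option maxHeartbeats 1600000 in
theorem CD_CV_neg_ratio_tendsto_alpha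
    (Γ : Measure Sphere2) [IsFiniteMeasure Γ]
    (α a1 a2 a3 a4 l1 l2 : ℝ) (hα1 : 1 < α) (hα2 : α < 2)
    (hl1 : l1 ^ 2 - (a1 + a4) * l1 + (a1 * a4 - a2 * a3) = 0)
    (hl2 : l2 ^ 2 - (a1 + a4) * l2 + (a1 * a4 - a2 * a3) = 0)
    (hne : l1 ≠ l2) (habs1 : |l1| < 1) (habs2 : |l2| < 1)
    (hgt : |l2| < |l1|) (hD1 : D1 Γ α a1 a2 a3 a4 l1 l2 ≠ 0) :
    (∀ᶠ h : ℕ in atTop, CVneg Γ α a1 a2 a3 a4 l1 l2 h ≠ 0) ∧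
    Tendsto (fun h : ℕ => CDneg Γ α a1 a2 a3 a4 l1 l2 h / CVneg Γ α a1 a2 a3 a4 l1 l2 h) atTop (𝓝 α) := by
  clear hl1 hl2
  have hα0 : (0:ℝ) < α := by linarith
  have hp0 : (0:ℝ) < α - 1 := by linarith
  have hp1 : α - 1 ≤ 1 := by linarith
  have hl1ne : l1 ≠ 0 := by
    intro h0
    rw [h0, abs_zero] at hgt
    exact absurd hgt (not_lt.2 (abs_nonneg l2))
  have hL0 : (0:ℝ) < |l1| := abs_pos.2 hl1ne
  have hden : l2 - l1 ≠ 0 := sub_ne_zero.2 (Ne.symm hne)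
  have hdenpos : (0:ℝ) < |l2 - l1| := abs_pos.2 hden
  have hs1 : ∀ s : Sphere2, |s.1.1| ≤ 1 := by
    intro s
    rw [← sq_le_one_iff_abs_le_one]
    nlinarith [s.2, sq_nonneg s.1.2]
  have hs2 : ∀ s : Sphere2, |s.1.2| ≤ 1 := by
    intro s
    rw [← sq_le_one_iff_abs_le_one]
    nlinarith [s.2, sq_nonneg s.1.1]
  have hl2pow : ∀ n : ℕ, |l2| ^ n ≤ |l1| ^ n :=
    fun n => pow_le_pow_left₀ (abs_nonneg l2) hgt.le n
  have hl1pow1 : ∀ n : ℕ, |l1| ^ n ≤ 1 := fun n => pow_le_one₀ hL0.le habs1.le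
  -- the uniform constant M
  obtain ⟨M, hM1, hMA, hMB, hMC⟩ :
      ∃ M : ℝ, 1 ≤ M ∧
        (∀ (j : ℕ) (s : Sphere2), |A1 a1 a2 a3 a4 l1 l2 j s| ≤ M * |l1| ^ j) ∧
        (∀ (j : ℕ) (s : Sphere2), |B1 a1 a2 a3 a4 l1 l2 j s| ≤ M * |l1| ^ j) ∧
        (∀ (j : ℕ) (s : Sphere2), |C1 a1 a2 a3 a4 l1 l2 j s| ≤ M * |l1| ^ j) := by
    set N : ℝ := |l1| + |l2| + |a1| + |a2| + |a3| + |a4| with hN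
    have hN0 : 0 ≤ N := by positivity
    refine ⟨(2 * N + 2) / |l2 - l1| + 1, ?_, ?_, ?_, ?_⟩
    · have : (0:ℝ) ≤ (2 * N + 2) / |l2 - l1| := by positivity
      linarith
    · intro j s
      rw [A1, abs_div, div_le_iff₀ hdenpos]
      have h1 : |l2 * l1 ^ j * s.1.1| ≤ |l2| * |l1| ^ j := by
        rw [abs_mul, abs_mul, abs_pow]
        calc |l2| * |l1| ^ j * |s.1.1| ≤ |l2| * |l1| ^ j * 1 := by gcongr; exact hs1 s
          _ = |l2| * |l1| ^ j := mul_one _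
      have h2 : |l1 ^ j * a1 * s.1.1| ≤ |a1| * |l1| ^ j := by
        rw [abs_mul, abs_mul, abs_pow]
        calc |l1| ^ j * |a1| * |s.1.1| ≤ |l1| ^ j * |a1| * 1 := by gcongr; exact hs1 s
          _ = |a1| * |l1| ^ j := by ring
      have h3 : |l1 ^ j * a2 * s.1.2| ≤ |a2| * |l1| ^ j := by
        rw [abs_mul, abs_mul, abs_pow]
        calc |l1| ^ j * |a2| * |s.1.2| ≤ |l1| ^ j * |a2| * 1 := by gcongr; exact hs2 s
          _ = |a2| * |l1| ^ j := by ring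
      have htri : |l2 * l1 ^ j * s.1.1 - l1 ^ j * a1 * s.1.1 - l1 ^ j * a2 * s.1.2|
          ≤ |l2 * l1 ^ j * s.1.1 - l1 ^ j * a1 * s.1.1| + |l1 ^ j * a2 * s.1.2| := abs_sub _ _
      have htri2 : |l2 * l1 ^ j * s.1.1 - l1 ^ j * a1 * s.1.1|
          ≤ |l2 * l1 ^ j * s.1.1| + |l1 ^ j * a1 * s.1.1| := abs_sub _ _
      have hMden : 2 * N + 2 ≤ ((2 * N + 2) / |l2 - l1| + 1) * |l2 - l1| := by
        rw [add_mul, div_mul_cancel₀ _ hdenpos.ne']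
        nlinarith
      have hNbig : |l2| + |a1| + |a2| ≤ 2 * N + 2 := by
        rw [hN]
        have := abs_nonneg l1; have := abs_nonneg l2; have := abs_nonneg a1
        have := abs_nonneg a2; have := abs_nonneg a3; have := abs_nonneg a4
        linarith
      have hpowpos : (0:ℝ) < |l1| ^ j := by positivity
      nlinarith [hpowpos, hMden, hNbig, htri, htri2, h1, h2, h3]
    · intro j s
      rw [B1, abs_div, div_le_iff₀ hdenpos]
      have h1 : |-(l1 * l2 ^ j * s.1.1)| ≤ |l1| * |l1| ^ j := by
        rw [abs_neg, abs_mul, abs_mul, abs_pow]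
        calc |l1| * |l2| ^ j * |s.1.1| ≤ |l1| * |l1| ^ j * 1 :=
              mul_le_mul (mul_le_mul_of_nonneg_left (hl2pow j) (abs_nonneg l1)) (hs1 s)
                (abs_nonneg _) (by positivity)
          _ = |l1| * |l1| ^ j := mul_one _
      have h2 : |l2 ^ j * a1 * s.1.1| ≤ |a1| * |l1| ^ j := by
        rw [abs_mul, abs_mul, abs_pow]
        calc |l2| ^ j * |a1| * |s.1.1| ≤ |l1| ^ j * |a1| * 1 :=
              mul_le_mul (mul_le_mul_of_nonneg_right (hl2pow j) (abs_nonneg a1)) (hs1 s)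
                (abs_nonneg _) (by positivity)
          _ = |a1| * |l1| ^ j := by ring
      have h3 : |l2 ^ j * a2 * s.1.2| ≤ |a2| * |l1| ^ j := by
        rw [abs_mul, abs_mul, abs_pow]
        calc |l2| ^ j * |a2| * |s.1.2| ≤ |l1| ^ j * |a2| * 1 :=
              mul_le_mul (mul_le_mul_of_nonneg_right (hl2pow j) (abs_nonneg a2)) (hs2 s)
                (abs_nonneg _) (by positivity)
          _ = |a2| * |l1| ^ j := by ring
      have htri : |-(l1 * l2 ^ j * s.1.1) + l2 ^ j * a1 * s.1.1 + l2 ^ j * a2 * s.1.2|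
          ≤ |-(l1 * l2 ^ j * s.1.1) + l2 ^ j * a1 * s.1.1| + |l2 ^ j * a2 * s.1.2| := abs_add_le _ _
      have htri2 : |-(l1 * l2 ^ j * s.1.1) + l2 ^ j * a1 * s.1.1|
          ≤ |-(l1 * l2 ^ j * s.1.1)| + |l2 ^ j * a1 * s.1.1| := abs_add_le _ _
      have hMden : 2 * N + 2 ≤ ((2 * N + 2) / |l2 - l1| + 1) * |l2 - l1| := by
        rw [add_mul, div_mul_cancel₀ _ hdenpos.ne']
        nlinarith
      have hNbig : |l1| + |a1| + |a2| ≤ 2 * N + 2 := by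
        rw [hN]
        have := abs_nonneg l1; have := abs_nonneg l2; have := abs_nonneg a1
        have := abs_nonneg a2; have := abs_nonneg a3; have := abs_nonneg a4
        linarith
      have hpowpos : (0:ℝ) < |l1| ^ j := by positivity
      nlinarith [hpowpos, hMden, hNbig, htri, htri2, h1, h2, h3]
    · intro j s
      rw [C1, abs_div, div_le_iff₀ hdenpos]
      have h1 : |l1 ^ j * (-(a3 * s.1.1) + l2 * s.1.2 - a4 * s.1.2)|
          ≤ (|a3| + |l2| + |a4|) * |l1| ^ j := by
        rw [abs_mul, abs_pow]
        have hin : |-(a3 * s.1.1) + l2 * s.1.2 - a4 * s.1.2| ≤ |a3| + |l2| + |a4| := by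
          have t1 : |-(a3 * s.1.1) + l2 * s.1.2 - a4 * s.1.2|
              ≤ |-(a3 * s.1.1) + l2 * s.1.2| + |a4 * s.1.2| := abs_sub _ _
          have t2 : |-(a3 * s.1.1) + l2 * s.1.2| ≤ |-(a3 * s.1.1)| + |l2 * s.1.2| := abs_add_le _ _
          have u1 : |-(a3 * s.1.1)| ≤ |a3| := by
            rw [abs_neg, abs_mul]
            calc |a3| * |s.1.1| ≤ |a3| * 1 := by gcongr; exact hs1 s
              _ = |a3| := mul_one _
          have u2 : |l2 * s.1.2| ≤ |l2| := by
            rw [abs_mul]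
            calc |l2| * |s.1.2| ≤ |l2| * 1 := by gcongr; exact hs2 s
              _ = |l2| := mul_one _
          have u3 : |a4 * s.1.2| ≤ |a4| := by
            rw [abs_mul]
            calc |a4| * |s.1.2| ≤ |a4| * 1 := by gcongr; exact hs2 s
              _ = |a4| := mul_one _
          linarith
        calc |l1| ^ j * |-(a3 * s.1.1) + l2 * s.1.2 - a4 * s.1.2|
            ≤ |l1| ^ j * (|a3| + |l2| + |a4|) := by
              gcongr
          _ = (|a3| + |l2| + |a4|) * |l1| ^ j := by ring
      have h2 : |l2 ^ j * (a3 * s.1.1 - l1 * s.1.2 + a4 * s.1.2)|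
          ≤ (|a3| + |l1| + |a4|) * |l1| ^ j := by
        rw [abs_mul, abs_pow]
        have hin : |a3 * s.1.1 - l1 * s.1.2 + a4 * s.1.2| ≤ |a3| + |l1| + |a4| := by
          have t1 : |a3 * s.1.1 - l1 * s.1.2 + a4 * s.1.2|
              ≤ |a3 * s.1.1 - l1 * s.1.2| + |a4 * s.1.2| := abs_add_le _ _
          have t2 : |a3 * s.1.1 - l1 * s.1.2| ≤ |a3 * s.1.1| + |l1 * s.1.2| := abs_sub _ _
          have u1 : |a3 * s.1.1| ≤ |a3| := by
            rw [abs_mul]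
            calc |a3| * |s.1.1| ≤ |a3| * 1 := by gcongr; exact hs1 s
              _ = |a3| := mul_one _
          have u2 : |l1 * s.1.2| ≤ |l1| := by
            rw [abs_mul]
            calc |l1| * |s.1.2| ≤ |l1| * 1 := by gcongr; exact hs2 s
              _ = |l1| := mul_one _
          have u3 : |a4 * s.1.2| ≤ |a4| := by
            rw [abs_mul]
            calc |a4| * |s.1.2| ≤ |a4| * 1 := by gcongr; exact hs2 s
              _ = |a4| := mul_one _
          linarith
        calc |l2| ^ j * |a3 * s.1.1 - l1 * s.1.2 + a4 * s.1.2|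
            ≤ |l1| ^ j * (|a3| + |l1| + |a4|) :=
              mul_le_mul (hl2pow j) hin (abs_nonneg _) (by positivity)
          _ = (|a3| + |l1| + |a4|) * |l1| ^ j := by ring
      have htri : |l1 ^ j * (-(a3 * s.1.1) + l2 * s.1.2 - a4 * s.1.2)
            + l2 ^ j * (a3 * s.1.1 - l1 * s.1.2 + a4 * s.1.2)|
          ≤ |l1 ^ j * (-(a3 * s.1.1) + l2 * s.1.2 - a4 * s.1.2)|
            + |l2 ^ j * (a3 * s.1.1 - l1 * s.1.2 + a4 * s.1.2)| := abs_add_le _ _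
      have hMden : 2 * N + 2 ≤ ((2 * N + 2) / |l2 - l1| + 1) * |l2 - l1| := by
        rw [add_mul, div_mul_cancel₀ _ hdenpos.ne']
        nlinarith
      have hNbig : (|a3| + |l2| + |a4|) + (|a3| + |l1| + |a4|) ≤ 2 * N + 2 := by
        rw [hN]
        have := abs_nonneg l1; have := abs_nonneg l2; have := abs_nonneg a1
        have := abs_nonneg a2; have := abs_nonneg a3; have := abs_nonneg a4
        linarith
      have hpowpos : (0:ℝ) < |l1| ^ j := by positivity
      nlinarith [hpowpos, hMden, hNbig, htri, h1, h2]
  have hM0 : (0:ℝ) < M := by linarith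
  -- measurability
  have hco1 : Measurable (fun s : Sphere2 => s.1.1) := measurable_fst.comp measurable_subtype_coe
  have hco2 : Measurable (fun s : Sphere2 => s.1.2) := measurable_snd.comp measurable_subtype_coe
  have hmeasA : ∀ j, Measurable (fun s => A1 a1 a2 a3 a4 l1 l2 j s) := by
    intro j; unfold A1; fun_prop
  have hmeasB : ∀ j, Measurable (fun s => B1 a1 a2 a3 a4 l1 l2 j s) := by
    intro j; unfold B1; fun_prop
  have hmeasC : ∀ j, Measurable (fun s => C1 a1 a2 a3 a4 l1 l2 j s) := by
    intro j; unfold C1; fun_prop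
  have hmeasSC : ∀ j, Measurable (fun s => spow (C1 a1 a2 a3 a4 l1 l2 j s) (α - 1)) :=
    fun j => (measurable_spow hp0.le).comp (hmeasC j)
  have hmeasE : ∀ (h j : ℕ),
      Measurable (fun s => l1 ^ h * A1 a1 a2 a3 a4 l1 l2 j s + l2 ^ h * B1 a1 a2 a3 a4 l1 l2 j s) :=
    fun h j => ((hmeasA j).const_mul _).add ((hmeasB j).const_mul _)
  -- integrability helper
  have key_int : ∀ (f : Sphere2 → ℝ) (c : ℝ), Measurable f → (∀ s, |f s| ≤ c) →
      Integrable f Γ := by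
    intro f c hm hb
    refine (integrable_const c).mono' hm.aestronglyMeasurable (ae_of_all _ fun s => ?_)
    simpa [Real.norm_eq_abs] using hb s
  -- bound on spow C
  have hspowC : ∀ (j : ℕ) (s : Sphere2),
      |spow (C1 a1 a2 a3 a4 l1 l2 j s) (α - 1)| ≤ M * (|l1| ^ (α - 1)) ^ j := by
    intro j s
    rw [abs_spow hp0.ne']
    calc |C1 a1 a2 a3 a4 l1 l2 j s| ^ (α - 1) ≤ (M * |l1| ^ j) ^ (α - 1) :=
          Real.rpow_le_rpow (abs_nonneg _) (hMC j s) hp0.le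
      _ = M ^ (α - 1) * ((|l1| ^ j : ℝ)) ^ (α - 1) := Real.mul_rpow hM0.le (by positivity)
      _ = M ^ (α - 1) * (|l1| ^ (α - 1)) ^ j := by rw [pow_rpow_swap hL0.le]
      _ ≤ M * (|l1| ^ (α - 1)) ^ j := by
          have hMle : M ^ (α - 1) ≤ M := by
            calc M ^ (α - 1) ≤ M ^ (1:ℝ) := Real.rpow_le_rpow_of_exponent_le hM1 hp1
              _ = M := Real.rpow_one M
          exact mul_le_mul_of_nonneg_right hMle (by positivity)
  have hr0 : (0:ℝ) < |l1| ^ (α - 1) := Real.rpow_pos_of_pos hL0 _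
  have hr1 : |l1| ^ (α - 1) < 1 := Real.rpow_lt_one hL0.le habs1 hp0
  have hρ0 : (0:ℝ) < |l1| ^ α := Real.rpow_pos_of_pos hL0 _
  have hρ1 : |l1| ^ α < 1 := Real.rpow_lt_one hL0.le habs1 hα0
  have hρeq : |l1| ^ α = |l1| * |l1| ^ (α - 1) := by
    nth_rewrite 2 [← Real.rpow_one |l1|]
    rw [← Real.rpow_add hL0]
    norm_num
  -- product bounds
  have hAC : ∀ (j : ℕ) (s : Sphere2),
      |A1 a1 a2 a3 a4 l1 l2 j s * spow (C1 a1 a2 a3 a4 l1 l2 j s) (α - 1)|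
        ≤ M ^ 2 * (|l1| ^ α) ^ j := by
    intro j s
    rw [abs_mul]
    calc |A1 a1 a2 a3 a4 l1 l2 j s| * |spow (C1 a1 a2 a3 a4 l1 l2 j s) (α - 1)|
        ≤ (M * |l1| ^ j) * (M * (|l1| ^ (α - 1)) ^ j) :=
          mul_le_mul (hMA j s) (hspowC j s) (abs_nonneg _) (by positivity)
      _ = M ^ 2 * (|l1| * |l1| ^ (α - 1)) ^ j := by rw [mul_pow]; ring
      _ = M ^ 2 * (|l1| ^ α) ^ j := by rw [← hρeq]
  have hBC : ∀ (j : ℕ) (s : Sphere2),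
      |B1 a1 a2 a3 a4 l1 l2 j s * spow (C1 a1 a2 a3 a4 l1 l2 j s) (α - 1)|
        ≤ M ^ 2 * (|l1| ^ α) ^ j := by
    intro j s
    rw [abs_mul]
    calc |B1 a1 a2 a3 a4 l1 l2 j s| * |spow (C1 a1 a2 a3 a4 l1 l2 j s) (α - 1)|
        ≤ (M * |l1| ^ j) * (M * (|l1| ^ (α - 1)) ^ j) :=
          mul_le_mul (hMB j s) (hspowC j s) (abs_nonneg _) (by positivity)
      _ = M ^ 2 * (|l1| * |l1| ^ (α - 1)) ^ j := by rw [mul_pow]; ring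
      _ = M ^ 2 * (|l1| ^ α) ^ j := by rw [← hρeq]
  have hintA : ∀ j, Integrable
      (fun s => A1 a1 a2 a3 a4 l1 l2 j s * spow (C1 a1 a2 a3 a4 l1 l2 j s) (α - 1)) Γ :=
    fun j => key_int _ (M ^ 2 * (|l1| ^ α) ^ j) ((hmeasA j).mul (hmeasSC j)) (hAC j)
  have hintB : ∀ j, Integrable
      (fun s => B1 a1 a2 a3 a4 l1 l2 j s * spow (C1 a1 a2 a3 a4 l1 l2 j s) (α - 1)) Γ :=
    fun j => key_int _ (M ^ 2 * (|l1| ^ α) ^ j) ((hmeasB j).mul (hmeasSC j)) (hBC j)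
  set μT : ℝ := (Γ Set.univ).toReal with hμT
  have hμT0 : 0 ≤ μT := ENNReal.toReal_nonneg
  set IA : ℕ → ℝ := fun j =>
    ∫ s, A1 a1 a2 a3 a4 l1 l2 j s * spow (C1 a1 a2 a3 a4 l1 l2 j s) (α - 1) ∂Γ with hIAdef
  set IB : ℕ → ℝ := fun j =>
    ∫ s, B1 a1 a2 a3 a4 l1 l2 j s * spow (C1 a1 a2 a3 a4 l1 l2 j s) (α - 1) ∂Γ with hIBdef
  have hIAb : ∀ j, |IA j| ≤ M ^ 2 * (|l1| ^ α) ^ j * μT := by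
    intro j
    have := norm_integral_le_of_norm_le_const (μ := Γ)
      (f := fun s => A1 a1 a2 a3 a4 l1 l2 j s * spow (C1 a1 a2 a3 a4 l1 l2 j s) (α - 1))
      (C := M ^ 2 * (|l1| ^ α) ^ j)
      (ae_of_all _ fun s => by rw [Real.norm_eq_abs]; exact hAC j s)
    rw [Real.norm_eq_abs, measureReal_def] at this; exact this
  have hIBb : ∀ j, |IB j| ≤ M ^ 2 * (|l1| ^ α) ^ j * μT := by
    intro j
    have := norm_integral_le_of_norm_le_const (μ := Γ)
      (f := fun s => B1 a1 a2 a3 a4 l1 l2 j s * spow (C1 a1 a2 a3 a4 l1 l2 j s) (α - 1))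
      (C := M ^ 2 * (|l1| ^ α) ^ j)
      (ae_of_all _ fun s => by rw [Real.norm_eq_abs]; exact hBC j s)
    rw [Real.norm_eq_abs, measureReal_def] at this; exact this
  have hgeo : Summable (fun j : ℕ => (|l1| ^ α) ^ j) :=
    summable_geometric_of_lt_one hρ0.le hρ1
  have hsumIA : Summable IA := by
    refine Summable.of_norm_bounded (g := fun j => M ^ 2 * μT * (|l1| ^ α) ^ j)
      (hgeo.mul_left _) fun j => ?_
    rw [Real.norm_eq_abs]
    calc |IA j| ≤ M ^ 2 * (|l1| ^ α) ^ j * μT := hIAb j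
      _ = M ^ 2 * μT * (|l1| ^ α) ^ j := by ring
  have hsumIB : Summable IB := by
    refine Summable.of_norm_bounded (g := fun j => M ^ 2 * μT * (|l1| ^ α) ^ j)
      (hgeo.mul_left _) fun j => ?_
    rw [Real.norm_eq_abs]
    calc |IB j| ≤ M ^ 2 * (|l1| ^ α) ^ j * μT := hIBb j
      _ = M ^ 2 * μT * (|l1| ^ α) ^ j := by ring
  have hD1eq : D1 Γ α a1 a2 a3 a4 l1 l2 = ∑' j, IA j := rfl
  -- CV decomposition
  have hCVint : ∀ (h j : ℕ),
      (∫ s, spow (C1 a1 a2 a3 a4 l1 l2 j s) (α - 1) *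
        (l1 ^ h * A1 a1 a2 a3 a4 l1 l2 j s + l2 ^ h * B1 a1 a2 a3 a4 l1 l2 j s) ∂Γ)
        = l1 ^ h * IA j + l2 ^ h * IB j := by
    intro h j
    have heq : (fun s => spow (C1 a1 a2 a3 a4 l1 l2 j s) (α - 1) *
        (l1 ^ h * A1 a1 a2 a3 a4 l1 l2 j s + l2 ^ h * B1 a1 a2 a3 a4 l1 l2 j s))
        = fun s => l1 ^ h * (A1 a1 a2 a3 a4 l1 l2 j s * spow (C1 a1 a2 a3 a4 l1 l2 j s) (α - 1))
          + l2 ^ h * (B1 a1 a2 a3 a4 l1 l2 j s * spow (C1 a1 a2 a3 a4 l1 l2 j s) (α - 1)) := by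
      funext s; ring
    rw [heq, integral_add ((hintA j).const_mul _) ((hintB j).const_mul _),
      integral_const_mul, integral_const_mul]
  have hCV : ∀ h : ℕ, CVneg Γ α a1 a2 a3 a4 l1 l2 h
      = l1 ^ h * (∑' j, IA j) + l2 ^ h * (∑' j, IB j) := by
    intro h
    have h1 : CVneg Γ α a1 a2 a3 a4 l1 l2 h = ∑' j, (l1 ^ h * IA j + l2 ^ h * IB j) := by
      simp only [CVneg]
      exact tsum_congr fun j => hCVint h j
    rw [h1, Summable.tsum_add (hsumIA.mul_left _) (hsumIB.mul_left _), tsum_mul_left, tsum_mul_left]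
  -- bound on epsilon
  have hEb : ∀ (h j : ℕ) (s : Sphere2),
      |l1 ^ h * A1 a1 a2 a3 a4 l1 l2 j s + l2 ^ h * B1 a1 a2 a3 a4 l1 l2 j s|
        ≤ 2 * M * |l1| ^ (h + j) := by
    intro h j s
    have h1 : |l1 ^ h * A1 a1 a2 a3 a4 l1 l2 j s| ≤ |l1| ^ h * (M * |l1| ^ j) := by
      rw [abs_mul, abs_pow]
      exact mul_le_mul_of_nonneg_left (hMA j s) (by positivity)
    have h2 : |l2 ^ h * B1 a1 a2 a3 a4 l1 l2 j s| ≤ |l1| ^ h * (M * |l1| ^ j) := by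
      rw [abs_mul, abs_pow]
      exact mul_le_mul (hl2pow h) (hMB j s) (abs_nonneg _) (by positivity)
    calc |l1 ^ h * A1 a1 a2 a3 a4 l1 l2 j s + l2 ^ h * B1 a1 a2 a3 a4 l1 l2 j s|
        ≤ |l1 ^ h * A1 a1 a2 a3 a4 l1 l2 j s| + |l2 ^ h * B1 a1 a2 a3 a4 l1 l2 j s| := abs_add_le _ _
      _ ≤ 2 * M * |l1| ^ (h + j) := by rw [pow_add]; nlinarith [h1, h2]
  have hEα : ∀ (h j : ℕ) (s : Sphere2),
      |l1 ^ h * A1 a1 a2 a3 a4 l1 l2 j s + l2 ^ h * B1 a1 a2 a3 a4 l1 l2 j s| ^ α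
        ≤ (2 * M) ^ α * ((|l1| ^ α) ^ h * (|l1| ^ α) ^ j) := by
    intro h j s
    calc |l1 ^ h * A1 a1 a2 a3 a4 l1 l2 j s + l2 ^ h * B1 a1 a2 a3 a4 l1 l2 j s| ^ α
        ≤ (2 * M * |l1| ^ (h + j)) ^ α :=
          Real.rpow_le_rpow (abs_nonneg _) (hEb h j s) hα0.le
      _ = (2 * M) ^ α * ((|l1| ^ (h + j) : ℝ)) ^ α := Real.mul_rpow (by positivity) (by positivity)
      _ = (2 * M) ^ α * (|l1| ^ α) ^ (h + j) := by rw [pow_rpow_swap hL0.le]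
      _ = (2 * M) ^ α * ((|l1| ^ α) ^ h * (|l1| ^ α) ^ j) := by rw [pow_add]
  -- pointwise CD estimate
  have hptw : ∀ (h j : ℕ) (s : Sphere2),
      |(|l1 ^ h * A1 a1 a2 a3 a4 l1 l2 j s + l2 ^ h * B1 a1 a2 a3 a4 l1 l2 j s| ^ α
          + |C1 a1 a2 a3 a4 l1 l2 j s| ^ α
          - |C1 a1 a2 a3 a4 l1 l2 j s -
              (l1 ^ h * A1 a1 a2 a3 a4 l1 l2 j s + l2 ^ h * B1 a1 a2 a3 a4 l1 l2 j s)| ^ α)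
        - α * (spow (C1 a1 a2 a3 a4 l1 l2 j s) (α - 1) *
            (l1 ^ h * A1 a1 a2 a3 a4 l1 l2 j s + l2 ^ h * B1 a1 a2 a3 a4 l1 l2 j s))|
        ≤ (1 + 2 * α) * ((2 * M) ^ α * ((|l1| ^ α) ^ h * (|l1| ^ α) ^ j)) := by
    intro h j s
    set c := C1 a1 a2 a3 a4 l1 l2 j s
    set e := l1 ^ h * A1 a1 a2 a3 a4 l1 l2 j s + l2 ^ h * B1 a1 a2 a3 a4 l1 l2 j s
    have hk := key_est hα1 hα2 c e
    have he := hEα h j s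
    have heq : (|e| ^ α + |c| ^ α - |c - e| ^ α) - α * (spow c (α - 1) * e)
        = |e| ^ α + ((|c| ^ α - |c - e| ^ α) - α * (spow c (α - 1) * e)) := by ring
    rw [heq]
    refine (abs_add_le _ _).trans ?_
    rw [abs_of_nonneg (Real.rpow_nonneg (abs_nonneg _) _)]
    have hX : |c| ^ α - |c - e| ^ α - α * (spow c (α - 1) * e) ≤ 2 * α * |e| ^ α :=
      (le_abs_self _).trans hk
    have hXnn : 0 ≤ (2 * M) ^ α * ((|l1| ^ α) ^ h * (|l1| ^ α) ^ j) := by positivity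
    nlinarith [he, hX, hα0, Real.rpow_nonneg (abs_nonneg e) α]
  -- integrability of the CD integrand
  have hintG : ∀ (h j : ℕ), Integrable
      (fun s => |l1 ^ h * A1 a1 a2 a3 a4 l1 l2 j s + l2 ^ h * B1 a1 a2 a3 a4 l1 l2 j s| ^ α
        + |C1 a1 a2 a3 a4 l1 l2 j s| ^ α
        - |C1 a1 a2 a3 a4 l1 l2 j s -
            (l1 ^ h * A1 a1 a2 a3 a4 l1 l2 j s + l2 ^ h * B1 a1 a2 a3 a4 l1 l2 j s)| ^ α) Γ := by
    intro h j
    have mrpow : ∀ (f : Sphere2 → ℝ), Measurable f → Measurable (fun s => |f s| ^ α) :=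
      fun f hf => ((Real.continuous_rpow_const hα0.le).comp continuous_abs).measurable.comp hf
    have hE2M : ∀ s : Sphere2,
        |l1 ^ h * A1 a1 a2 a3 a4 l1 l2 j s + l2 ^ h * B1 a1 a2 a3 a4 l1 l2 j s| ≤ 2 * M := by
      intro s
      refine (hEb h j s).trans ?_
      nlinarith [hl1pow1 (h + j), hM0]
    have hCM : ∀ s : Sphere2, |C1 a1 a2 a3 a4 l1 l2 j s| ≤ M := by
      intro s
      refine (hMC j s).trans ?_
      nlinarith [hl1pow1 j, hM0]
    have i1 : Integrable (fun s =>
        |l1 ^ h * A1 a1 a2 a3 a4 l1 l2 j s + l2 ^ h * B1 a1 a2 a3 a4 l1 l2 j s| ^ α) Γ := by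
      refine key_int _ ((2 * M) ^ α) (mrpow _ (hmeasE h j)) fun s => ?_
      rw [abs_of_nonneg (Real.rpow_nonneg (abs_nonneg _) _)]
      exact Real.rpow_le_rpow (abs_nonneg _) (hE2M s) hα0.le
    have i2 : Integrable (fun s => |C1 a1 a2 a3 a4 l1 l2 j s| ^ α) Γ := by
      refine key_int _ (M ^ α) (mrpow _ (hmeasC j)) fun s => ?_
      rw [abs_of_nonneg (Real.rpow_nonneg (abs_nonneg _) _)]
      exact Real.rpow_le_rpow (abs_nonneg _) (hCM s) hα0.le
    have i3 : Integrable (fun s => |C1 a1 a2 a3 a4 l1 l2 j s -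
        (l1 ^ h * A1 a1 a2 a3 a4 l1 l2 j s + l2 ^ h * B1 a1 a2 a3 a4 l1 l2 j s)| ^ α) Γ := by
      refine key_int _ ((3 * M) ^ α) (mrpow _ ((hmeasC j).sub (hmeasE h j))) fun s => ?_
      rw [abs_of_nonneg (Real.rpow_nonneg (abs_nonneg _) _)]
      refine Real.rpow_le_rpow (abs_nonneg _) ?_ hα0.le
      calc |C1 a1 a2 a3 a4 l1 l2 j s -
            (l1 ^ h * A1 a1 a2 a3 a4 l1 l2 j s + l2 ^ h * B1 a1 a2 a3 a4 l1 l2 j s)|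
          ≤ |C1 a1 a2 a3 a4 l1 l2 j s| +
            |l1 ^ h * A1 a1 a2 a3 a4 l1 l2 j s + l2 ^ h * B1 a1 a2 a3 a4 l1 l2 j s| := abs_sub _ _
        _ ≤ 3 * M := by linarith [hCM s, hE2M s]
    exact (i1.add i2).sub i3
  have hintCV : ∀ (h j : ℕ), Integrable (fun s =>
      α * (spow (C1 a1 a2 a3 a4 l1 l2 j s) (α - 1) *
        (l1 ^ h * A1 a1 a2 a3 a4 l1 l2 j s + l2 ^ h * B1 a1 a2 a3 a4 l1 l2 j s))) Γ := by
    intro h j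
    refine key_int _ (α * (M * (2 * M))) (((hmeasSC j).mul (hmeasE h j)).const_mul α)
      fun s => ?_
    rw [abs_mul, abs_mul, abs_of_pos hα0]
    have b1 : |spow (C1 a1 a2 a3 a4 l1 l2 j s) (α - 1)| ≤ M := by
      refine (hspowC j s).trans ?_
      nlinarith [(pow_le_one₀ hr0.le hr1.le : (|l1| ^ (α - 1)) ^ j ≤ 1), hM0]
    have b2 : |l1 ^ h * A1 a1 a2 a3 a4 l1 l2 j s + l2 ^ h * B1 a1 a2 a3 a4 l1 l2 j s|
        ≤ 2 * M := by
      refine (hEb h j s).trans ?_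
      nlinarith [hl1pow1 (h + j), hM0]
    have := mul_le_mul b1 b2 (abs_nonneg _) (by linarith)
    nlinarith [this, hα0, abs_nonneg (spow (C1 a1 a2 a3 a4 l1 l2 j s) (α - 1))]
  -- per-j CD-vs-CV bound
  have hGb : ∀ (h j : ℕ),
      |(∫ s, (|l1 ^ h * A1 a1 a2 a3 a4 l1 l2 j s + l2 ^ h * B1 a1 a2 a3 a4 l1 l2 j s| ^ α
          + |C1 a1 a2 a3 a4 l1 l2 j s| ^ α
          - |C1 a1 a2 a3 a4 l1 l2 j s -
              (l1 ^ h * A1 a1 a2 a3 a4 l1 l2 j s + l2 ^ h * B1 a1 a2 a3 a4 l1 l2 j s)| ^ α) ∂Γ)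
        - α * (l1 ^ h * IA j + l2 ^ h * IB j)|
        ≤ (1 + 2 * α) * (2 * M) ^ α * (|l1| ^ α) ^ h * μT * (|l1| ^ α) ^ j := by
    intro h j
    have e1 : α * (l1 ^ h * IA j + l2 ^ h * IB j)
        = ∫ s, α * (spow (C1 a1 a2 a3 a4 l1 l2 j s) (α - 1) *
            (l1 ^ h * A1 a1 a2 a3 a4 l1 l2 j s + l2 ^ h * B1 a1 a2 a3 a4 l1 l2 j s)) ∂Γ := by
      rw [integral_const_mul, hCVint h j]
    rw [e1, ← integral_sub (hintG h j) (hintCV h j)]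
    have hb := norm_integral_le_of_norm_le_const (μ := Γ)
      (C := (1 + 2 * α) * ((2 * M) ^ α * ((|l1| ^ α) ^ h * (|l1| ^ α) ^ j)))
      (ae_of_all _ fun s => by
        rw [Real.norm_eq_abs]
        exact hptw h j s)
    rw [Real.norm_eq_abs] at hb
    calc _ ≤ (1 + 2 * α) * ((2 * M) ^ α * ((|l1| ^ α) ^ h * (|l1| ^ α) ^ j)) * μT := hb
      _ = (1 + 2 * α) * (2 * M) ^ α * (|l1| ^ α) ^ h * μT * (|l1| ^ α) ^ j := by ring
  -- summing up
  have hEbound : ∀ h : ℕ,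
      |CDneg Γ α a1 a2 a3 a4 l1 l2 h - α * CVneg Γ α a1 a2 a3 a4 l1 l2 h|
        ≤ ((1 + 2 * α) * (2 * M) ^ α * μT * (1 - |l1| ^ α)⁻¹) * (|l1| ^ α) ^ h := by
    intro h
    set G : ℕ → ℝ := fun j =>
      ∫ s, (|l1 ^ h * A1 a1 a2 a3 a4 l1 l2 j s + l2 ^ h * B1 a1 a2 a3 a4 l1 l2 j s| ^ α
        + |C1 a1 a2 a3 a4 l1 l2 j s| ^ α
        - |C1 a1 a2 a3 a4 l1 l2 j s -
            (l1 ^ h * A1 a1 a2 a3 a4 l1 l2 j s + l2 ^ h * B1 a1 a2 a3 a4 l1 l2 j s)| ^ α) ∂Γ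
      with hGdef
    set T : ℕ → ℝ := fun j => α * (l1 ^ h * IA j + l2 ^ h * IB j) with hTdef
    have hsumT : Summable T :=
      ((hsumIA.mul_left _).add (hsumIB.mul_left _)).mul_left α
    have hdiffb : ∀ j, ‖G j - T j‖
        ≤ ((1 + 2 * α) * (2 * M) ^ α * (|l1| ^ α) ^ h * μT) * (|l1| ^ α) ^ j := by
      intro j
      rw [Real.norm_eq_abs]
      calc |G j - T j| ≤ (1 + 2 * α) * (2 * M) ^ α * (|l1| ^ α) ^ h * μT * (|l1| ^ α) ^ j :=
            hGb h j
        _ = ((1 + 2 * α) * (2 * M) ^ α * (|l1| ^ α) ^ h * μT) * (|l1| ^ α) ^ j := by ring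
    have hsumdiff : Summable (fun j => G j - T j) :=
      Summable.of_norm_bounded (hgeo.mul_left _) hdiffb
    have hsumG : Summable G := by
      have := hsumdiff.add hsumT
      simpa using this
    have hCD : CDneg Γ α a1 a2 a3 a4 l1 l2 h = ∑' j, G j := rfl
    have hαCV : α * CVneg Γ α a1 a2 a3 a4 l1 l2 h = ∑' j, T j := by
      rw [hTdef]
      rw [tsum_mul_left, Summable.tsum_add (hsumIA.mul_left _) (hsumIB.mul_left _),
        tsum_mul_left, tsum_mul_left, hCV h]
    rw [hCD, hαCV, ← Summable.tsum_sub hsumG hsumT, ← Real.norm_eq_abs]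
    have hnsum : Summable (fun j => ‖G j - T j‖) :=
      Summable.of_nonneg_of_le (fun j => norm_nonneg _) hdiffb (hgeo.mul_left _)
    calc ‖∑' j, (G j - T j)‖ ≤ ∑' j, ‖G j - T j‖ := norm_tsum_le_tsum_norm hnsum
      _ ≤ ∑' j, ((1 + 2 * α) * (2 * M) ^ α * (|l1| ^ α) ^ h * μT) * (|l1| ^ α) ^ j :=
          Summable.tsum_le_tsum hdiffb hnsum (hgeo.mul_left _)
      _ = ((1 + 2 * α) * (2 * M) ^ α * (|l1| ^ α) ^ h * μT) * (1 - |l1| ^ α)⁻¹ := by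
          rw [tsum_mul_left, tsum_geometric_of_lt_one hρ0.le hρ1]
      _ = ((1 + 2 * α) * (2 * M) ^ α * μT * (1 - |l1| ^ α)⁻¹) * (|l1| ^ α) ^ h := by ring
  -- limits
  have hD1v : (∑' j, IA j) ≠ 0 := by rwa [hD1eq] at hD1
  have hCVdiv : Tendsto (fun h : ℕ => CVneg Γ α a1 a2 a3 a4 l1 l2 h / l1 ^ h) atTop
      (𝓝 (∑' j, IA j)) := by
    have heq : ∀ h : ℕ, CVneg Γ α a1 a2 a3 a4 l1 l2 h / l1 ^ h
        = (∑' j, IA j) + (l2 / l1) ^ h * (∑' j, IB j) := by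
      intro h
      rw [hCV h, div_pow]
      have hph : (l1:ℝ) ^ h ≠ 0 := pow_ne_zero _ hl1ne
      field_simp
    have h0 : Tendsto (fun h : ℕ => (l2 / l1) ^ h) atTop (𝓝 0) := by
      refine tendsto_pow_atTop_nhds_zero_of_abs_lt_one ?_
      rw [abs_div]
      exact (div_lt_one hL0).mpr hgt
    have := tendsto_const_nhds (α := ℕ) (f := atTop) (x := (∑' j, IA j)) |>.add
      (h0.mul_const (∑' j, IB j))
    rw [funext heq]
    simpa using this
  have hEdiv : Tendsto (fun h : ℕ =>
      (CDneg Γ α a1 a2 a3 a4 l1 l2 h - α * CVneg Γ α a1 a2 a3 a4 l1 l2 h) / l1 ^ h) atTop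
      (𝓝 0) := by
    refine squeeze_zero_norm (a := fun h : ℕ =>
      ((1 + 2 * α) * (2 * M) ^ α * μT * (1 - |l1| ^ α)⁻¹) * (|l1| ^ (α - 1)) ^ h) ?_ ?_
    · intro h
      rw [Real.norm_eq_abs, abs_div, abs_pow, div_le_iff₀ (by positivity : (0:ℝ) < |l1| ^ h)]
      calc |CDneg Γ α a1 a2 a3 a4 l1 l2 h - α * CVneg Γ α a1 a2 a3 a4 l1 l2 h|
          ≤ ((1 + 2 * α) * (2 * M) ^ α * μT * (1 - |l1| ^ α)⁻¹) * (|l1| ^ α) ^ h := hEbound h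
        _ = ((1 + 2 * α) * (2 * M) ^ α * μT * (1 - |l1| ^ α)⁻¹) * (|l1| ^ (α - 1)) ^ h
              * |l1| ^ h := by
            rw [show (|l1| ^ α) ^ h = (|l1| ^ (α - 1)) ^ h * |l1| ^ h by
              rw [← mul_pow]
              congr 1
              rw [hρeq]; ring]
            ring
    · have := (tendsto_pow_atTop_nhds_zero_of_abs_lt_one
        (by rwa [abs_of_pos hr0] : |(|l1| ^ (α - 1))| < 1)).const_mul
        ((1 + 2 * α) * (2 * M) ^ α * μT * (1 - |l1| ^ α)⁻¹)
      simpa using this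
  have hev : ∀ᶠ h : ℕ in atTop, CVneg Γ α a1 a2 a3 a4 l1 l2 h ≠ 0 := by
    filter_upwards [hCVdiv.eventually_ne hD1v] with h hh
    intro h0
    exact hh (by rw [h0, zero_div])
  refine ⟨hev, ?_⟩
  have hquot : Tendsto (fun h : ℕ =>
      ((CDneg Γ α a1 a2 a3 a4 l1 l2 h - α * CVneg Γ α a1 a2 a3 a4 l1 l2 h) / l1 ^ h)
        / (CVneg Γ α a1 a2 a3 a4 l1 l2 h / l1 ^ h)) atTop (𝓝 (0 / (∑' j, IA j))) :=
    hEdiv.div hCVdiv hD1v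
  rw [zero_div] at hquot
  have hfin := (tendsto_const_nhds (α := ℕ) (f := atTop) (x := α)).add hquot
  have heq : ∀ᶠ h : ℕ in atTop,
      α + ((CDneg Γ α a1 a2 a3 a4 l1 l2 h - α * CVneg Γ α a1 a2 a3 a4 l1 l2 h) / l1 ^ h)
          / (CVneg Γ α a1 a2 a3 a4 l1 l2 h / l1 ^ h)
        = CDneg Γ α a1 a2 a3 a4 l1 l2 h / CVneg Γ α a1 a2 a3 a4 l1 l2 h := by
    filter_upwards [hev] with h hh
    have hph : (l1:ℝ) ^ h ≠ 0 := pow_ne_zero _ hl1ne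
    field_simp
    ring
  have := hfin.congr' heq
  simpa using this
end
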